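/- arXiv:math/0006171 — 2 statements merged into one kernel-verified Lean document; each statement's English description precedes it below -/
import Mathlib

section
/- The exponential formula: for any h: ℕ → ℝ, exp(Σ_{k≥1} h(k) t^k/k!) = Σ_{n≥0} (t^n/n!)·Σ_{α ∈ Π_n} Π_{blocks α_k} h(|α_k|) as formal power series in t, where the n=0 term equals 1. -/
/-!
Put `f = ∑_{k ≥ 1} h k tᵏ / k!` and read `h 0` as `0`. Expanding `fᵐ` as a product of `m`
copies of `f`, `n! [tⁿ] fᵐ` is the sum over all maps `g : Fin n → Fin m` of
`∏ i, h |g⁻¹ i|`: there are `n! / ∏ i, lᵢ!` maps with fibre sizes `(lᵢ)`, since permutations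
of `Fin n` act transitively on them with stabiliser `∏ i, Perm (g⁻¹ i)`. Only surjections
contribute, and a surjection is the same thing as a set partition with `m` blocks together with
a bijection from its blocks to `Fin m`. Hence `n! [tⁿ] fᵐ / m!` is the sum of
`∏ h |block|` over the partitions with `m` blocks, and summing over `m ≤ n` gives the formula.
-/

open Finset Nat Function

section FiberCounting

variable {α ι : Type*} [Fintype α] [DecidableEq α] [Fintype ι] [DecidableEq ι]

theorem card_perm_comp_eq {g₁ g₂ : α → ι} (h : ∀ i, #{x | g₁ x = i} = #{x | g₂ x = i}) :
    #{σ : Equiv.Perm α | g₁ ∘ σ = g₂} = ∏ i, (#{x | g₂ x = i})! := by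
  let e : {σ : Equiv.Perm α // g₁ ∘ σ = g₂} ≃ ∀ i, ({x // g₂ x = i} ≃ {x // g₁ x = i}) :=
    { toFun σ i := σ.1.subtypeEquiv fun x => by rw [← congrFun σ.2 x]; rfl
      invFun F := ⟨Equiv.ofFiberEquiv F, funext (Equiv.ofFiberEquiv_map F)⟩
      left_inv _ := rfl
      right_inv F := funext fun i => Equiv.ext fun ⟨x, hx⟩ => by subst hx; rfl }
  rw [← Fintype.card_subtype, Fintype.card_congr e, Fintype.card_pi]
  refine prod_congr rfl fun i _ => ?_
  have hcard : Fintype.card {x // g₂ x = i} = Fintype.card {x // g₁ x = i} := by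
    simp only [Fintype.card_subtype, h]
  rw [Fintype.card_equiv (Fintype.equivOfCardEq hcard), Fintype.card_subtype]

omit [DecidableEq α] in
theorem exists_card_fiber_eq (d : ι → ℕ) (hd : ∑ i, d i = Fintype.card α) :
    ∃ g : α → ι, ∀ i, #{x | g x = i} = d i := by
  have hcard : Fintype.card (Σ i, Fin (d i)) = Fintype.card α := by simp [hd]
  let e := Fintype.equivOfCardEq hcard
  refine ⟨fun x => (e.symm x).1, fun i => ?_⟩
  rw [← Fintype.card_subtype, ← Fintype.card_fin (d i)]
  exact Fintype.card_congr ((e.symm.subtypeEquiv fun _ => Iff.rfl).trans (Equiv.sigmaSubtype i))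

theorem card_fiber_eq_mul_prod_factorial (d : ι → ℕ) (hd : ∑ i, d i = Fintype.card α) :
    #{g : α → ι | ∀ i, #{x | g x = i} = d i} * ∏ i, (d i)! = (Fintype.card α)! := by
  obtain ⟨c, hc⟩ := exists_card_fiber_eq d hd
  have hmaps : ∀ σ ∈ (univ : Finset (Equiv.Perm α)),
      c ∘ σ ∈ ({g : α → ι | ∀ i, #{x | g x = i} = d i} : Finset _) := fun σ _ => by
    simpa [← hc] using fun i => card_equiv σ (by simp)
  rw [← Fintype.card_perm, ← Finset.card_univ, card_eq_sum_card_fiberwise hmaps, ← smul_eq_mul,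
    ← sum_const]
  refine sum_congr rfl fun g hg => ?_
  simp only [mem_filter, mem_univ, true_and] at hg
  rw [card_perm_comp_eq fun i => by rw [hc, hg]]
  simp only [hg]

theorem factorial_mul_coeff_prod_mk {K : Type*} [Field K] [CharZero K] (a : ℕ → K) :
    ((Fintype.card α)! : K) * PowerSeries.coeff (Fintype.card α)
        (∏ _i : ι, PowerSeries.mk fun k => a k / k !) =
      ∑ g : α → ι, ∏ i, a #{x | g x = i} := by
  let profile (g : α → ι) : ι →₀ ℕ := Finsupp.equivFunOnFinite.symm fun i => #{x | g x = i}
  have hmaps : ∀ g ∈ (univ : Finset (α → ι)),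
      profile g ∈ finsuppAntidiag univ (Fintype.card α) := fun g _ => by
    simp [profile, mem_finsuppAntidiag, ← card_eq_sum_card_fiberwise fun x _ => mem_univ (g x)]
  rw [PowerSeries.coeff_prod, mul_sum, ← sum_fiberwise_of_maps_to hmaps]
  refine sum_congr rfl fun l hl => ?_
  have hfiber : ∀ g, profile g = l ↔ ∀ i, #{x | g x = i} = l i := fun g => by
    simp [profile, Equiv.symm_apply_eq, funext_iff]
  simp_rw [hfiber]
  have hterm : ∀ g ∈ ({g | ∀ i, #{x | g x = i} = l i} : Finset (α → ι)),
      ∏ i, a #{x | g x = i} = ∏ i, a (l i) := fun g hg => by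
    simp only [(mem_filter.1 hg).2]
  rw [sum_congr rfl hterm, sum_const, nsmul_eq_mul,
    ← card_fiber_eq_mul_prod_factorial l (mem_finsuppAntidiag.1 hl).1]
  push_cast
  rw [mul_assoc, ← prod_mul_distrib]
  congr 1
  refine prod_congr rfl fun i _ => ?_
  rw [PowerSeries.coeff_mk, mul_div_cancel₀ _ (cast_ne_zero.2 (factorial_ne_zero _))]

end FiberCounting

namespace Finpartition

variable {α : Type*} [DecidableEq α]

theorem image_part {s : Finset α} (P : Finpartition s) : s.image P.part = P.parts := by
  ext b
  simp only [mem_image]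
  refine ⟨fun ⟨x, hx, hb⟩ => hb ▸ P.part_mem.2 hx, fun hb => ?_⟩
  obtain ⟨x, hx⟩ := P.nonempty_of_mem_parts hb
  exact ⟨x, P.le hb hx, P.part_eq_of_mem hb hx⟩

theorem eq_of_part_eq {s : Finset α} {P Q : Finpartition s} (h : ∀ x ∈ s, P.part x = Q.part x) :
    P = Q := by
  ext1
  rw [← image_part, ← image_part, image_congr h]

end Finpartition

section KernelPartition

variable {α ι : Type*} [Fintype α] [DecidableEq α]

instance [DecidableEq ι] (g : α → ι) : DecidableRel (Setoid.ker g).r :=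
  fun a b => decEq (g a) (g b)

def kerFinpartition [DecidableEq ι] (g : α → ι) : Finpartition (univ : Finset α) :=
  Finpartition.ofSetoid (Setoid.ker g)

theorem part_kerFinpartition_eq_iff [DecidableEq ι] {g : α → ι} {x y : α} :
    (kerFinpartition g).part x = (kerFinpartition g).part y ↔ g x = g y := by
  rw [← (kerFinpartition g).mem_part_iff_part_eq_part (mem_univ x) (mem_univ y), kerFinpartition,
    Finpartition.mem_part_ofSetoid_iff_rel, Setoid.ker_def, eq_comm]

namespace Finpartition

variable (P : Finpartition (univ : Finset α))

def labelParts (e : P.parts ≃ ι) (x : α) : ι :=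
  e ⟨P.part x, P.part_mem.2 (mem_univ x)⟩

variable {P}

theorem labelParts_eq_labelParts_iff {e : P.parts ≃ ι} {x y : α} :
    P.labelParts e x = P.labelParts e y ↔ P.part x = P.part y := by
  simp [labelParts, Subtype.ext_iff]

theorem filter_labelParts_eq [DecidableEq ι] (e : P.parts ≃ ι) (i : ι) :
    ({x | P.labelParts e x = i} : Finset α) = (e.symm i).1 := by
  ext x
  simp [labelParts, ← Equiv.eq_symm_apply, Subtype.ext_iff, P.part_eq_iff_mem (e.symm i).2]

theorem surjective_labelParts (e : P.parts ≃ ι) : Surjective (P.labelParts e) := fun i => by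
  obtain ⟨x, hx⟩ := P.nonempty_of_mem_parts (e.symm i).2
  exact ⟨x, e.eq_symm_apply.1 (Subtype.ext (P.part_eq_of_mem (e.symm i).2 hx))⟩

theorem labelParts_injective : Injective (P.labelParts (ι := ι)) := fun e₁ e₂ h => by
  ext b
  obtain ⟨x, hx⟩ := P.nonempty_of_mem_parts b.2
  have hb : (⟨P.part x, P.part_mem.2 (mem_univ x)⟩ : P.parts) = b :=
    Subtype.ext (P.part_eq_of_mem b.2 hx)
  rw [← hb]
  exact congrArg ((↑) : ι → ι) (congrFun h x)

theorem kerFinpartition_labelParts [DecidableEq ι] (e : P.parts ≃ ι) :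
    kerFinpartition (P.labelParts e) = P :=
  eq_of_part_eq fun x _ => by
    ext y
    rw [(kerFinpartition _).mem_part_iff_part_eq_part (mem_univ y) (mem_univ x),
      part_kerFinpartition_eq_iff, labelParts_eq_labelParts_iff,
      P.mem_part_iff_part_eq_part (mem_univ y) (mem_univ x)]

theorem prod_card_fiber_labelParts {M : Type*} [CommMonoid M] [Fintype ι] [DecidableEq ι]
    (a : ℕ → M) (e : P.parts ≃ ι) :
    ∏ i, a #{x | P.labelParts e x = i} = ∏ b ∈ P.parts, a #b := by
  simp_rw [filter_labelParts_eq]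
  rw [e.symm.prod_comp fun b => a #b.1, prod_coe_sort P.parts fun b => a #b]

end Finpartition

theorem exists_labelParts_eq [DecidableEq ι] {g : α → ι} (hg : Surjective g) :
    ∃ e, (kerFinpartition g).labelParts e = g := by
  set P := kerFinpartition g
  let F (i : ι) : P.parts := ⟨P.part (surjInv hg i), P.part_mem.2 (mem_univ _)⟩
  have hF (x : α) : F (g x) = ⟨P.part x, P.part_mem.2 (mem_univ x)⟩ :=
    Subtype.ext (part_kerFinpartition_eq_iff.2 (surjInv_eq hg (g x)))
  have hFbij : Bijective F := by
    refine ⟨fun i j hij => ?_, fun b => ?_⟩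
    · simpa [surjInv_eq hg] using part_kerFinpartition_eq_iff.1 (congrArg Subtype.val hij)
    · obtain ⟨x, hx⟩ := P.nonempty_of_mem_parts b.2
      exact ⟨g x, (hF x).trans (Subtype.ext (P.part_eq_of_mem b.2 hx))⟩
  exact ⟨(Equiv.ofBijective F hFbij).symm, funext fun x => by
    simp [Finpartition.labelParts, Equiv.symm_apply_eq, hF]⟩

theorem filter_surjective_kerFinpartition_eq [Fintype ι] [DecidableEq ι]
    (P : Finpartition (univ : Finset α)) :
    ({g | Surjective g ∧ kerFinpartition g = P} : Finset (α → ι)) = univ.image P.labelParts := by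
  ext g
  simp only [mem_filter, mem_univ, true_and, mem_image]
  constructor
  · rintro ⟨hg, rfl⟩
    exact exists_labelParts_eq hg
  · rintro ⟨e, rfl⟩
    exact ⟨P.surjective_labelParts e, P.kerFinpartition_labelParts e⟩

theorem sum_surjective_prod_card_fiber {R : Type*} [CommSemiring R] [Fintype ι] [DecidableEq ι]
    (a : ℕ → R) :
    ∑ g : α → ι with Surjective g, ∏ i, a #{x | g x = i} =
      ∑ P : Finpartition (univ : Finset α), Fintype.card (P.parts ≃ ι) * ∏ b ∈ P.parts, a #b := by
  rw [← sum_fiberwise _ kerFinpartition]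
  refine sum_congr rfl fun P _ => ?_
  rw [filter_filter, filter_surjective_kerFinpartition_eq,
    sum_image fun e₁ _ e₂ _ h => P.labelParts_injective h]
  simp only [Finpartition.prod_card_fiber_labelParts, sum_const, Finset.card_univ, nsmul_eq_mul]

theorem sum_prod_card_fiber_eq_sum_surjective {R : Type*} [CommSemiring R] [Fintype ι]
    [DecidableEq ι] (a : ℕ → R) (ha : a 0 = 0) :
    ∑ g : α → ι, ∏ i, a #{x | g x = i} = ∑ g : α → ι with Surjective g, ∏ i, a #{x | g x = i} := by
  refine (sum_filter_of_ne fun g _ hne => ?_).symm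
  by_contra hg
  obtain ⟨i, hi⟩ := not_forall.1 hg
  have hempty : #{x | g x = i} = 0 :=
    card_eq_zero.2 (filter_eq_empty_iff.2 fun x _ => not_exists.1 hi x)
  exact hne (prod_eq_zero (mem_univ i) (by rw [hempty, ha]))

end KernelPartition

theorem card_equiv_fin (β : Type*) [Fintype β] [DecidableEq β] (m : ℕ) :
    Fintype.card (β ≃ Fin m) = if Fintype.card β = m then m ! else 0 := by
  split_ifs with h
  · rw [Fintype.card_equiv (Fintype.equivFinOfCardEq h), h]
  · exact Fintype.card_eq_zero_iff.2
      ⟨fun e => h ((Fintype.card_congr e).trans (Fintype.card_fin m))⟩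

theorem coeff_pow_mk_eq_sum_finpartition {K : Type*} [Field K] [CharZero K] (h : ℕ → K)
    (n m : ℕ) :
    PowerSeries.coeff n ((PowerSeries.mk fun k => if k = 0 then 0 else h k / k !) ^ m) =
      (m ! / n ! : K) * ∑ P : Finpartition (univ : Finset (Fin n)) with #P.parts = m,
        ∏ b ∈ P.parts, h #b := by
  set a : ℕ → K := fun k => if k = 0 then 0 else h k
  have hmk : (PowerSeries.mk fun k => if k = 0 then 0 else h k / k !) =
      PowerSeries.mk fun k => a k / k ! := by
    simp only [a, ite_div, zero_div]
  have hprod (P : Finpartition (univ : Finset (Fin n))) :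
      ∏ b ∈ P.parts, a #b = ∏ b ∈ P.parts, h #b :=
    prod_congr rfl fun b hb => if_neg (P.nonempty_of_mem_parts hb).card_pos.ne'
  have hcoeff := factorial_mul_coeff_prod_mk (α := Fin n) (ι := Fin m) a
  rw [Fintype.card_fin, prod_const, Finset.card_univ, Fintype.card_fin,
    sum_prod_card_fiber_eq_sum_surjective a (if_pos rfl), sum_surjective_prod_card_fiber] at hcoeff
  rw [hmk, div_mul_eq_mul_div, eq_div_iff (cast_ne_zero.2 (factorial_ne_zero n)), mul_comm,
    hcoeff, sum_filter, mul_sum]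
  refine sum_congr rfl fun P _ => ?_
  rw [card_equiv_fin, Fintype.card_coe, hprod]
  split_ifs <;> simp

/-- **The exponential formula.**
For any `h : ℕ → ℝ`, `exp(Σ_{k≥1} h(k) t^k/k!) = Σ_{n≥0} (t^n/n!) Σ_{α∈Π_n} Π_{blocks} h(|block|)`
as formal power series in `t` (the `n = 0` term being `1`).  Since the series
`f = Σ_{k≥1} h(k)t^k/k!` has zero constant term, `exp(f)` is the formal power series whose
`n`-th coefficient is that of `Σ_{m=0}^{n} f^m/m!`; the right-hand side's `n`-th coefficient
is `(1/n!)·Σ_{α∈Π_n} Π_{blocks b of α} h(|b|)` (which is `1` for `n = 0`). -/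
theorem exponential_formula (h : ℕ → ℝ) (n : ℕ) :
    PowerSeries.coeff (R := ℝ) n
        (∑ m ∈ Finset.range (n + 1),
          PowerSeries.C (R := ℝ) ((m ! : ℝ))⁻¹ *
            (PowerSeries.mk (fun k => if k = 0 then (0 : ℝ) else h k / (k ! : ℝ))) ^ m)
      = ((n ! : ℝ))⁻¹ *
          ∑ α : Finpartition (Finset.univ : Finset (Fin n)),
            ∏ b ∈ α.parts, h b.card := by
  have hcard (P : Finpartition (univ : Finset (Fin n))) : #P.parts ∈ range (n + 1) :=
    mem_range_succ_iff.2 (by simpa using P.card_parts_le_card)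
  calc _ = ∑ m ∈ range (n + 1), (n ! : ℝ)⁻¹ *
        ∑ P : Finpartition (univ : Finset (Fin n)) with #P.parts = m, ∏ b ∈ P.parts, h #b := by
        refine (map_sum _ _ _).trans (sum_congr rfl fun m _ => ?_)
        rw [PowerSeries.coeff_C_mul, coeff_pow_mk_eq_sum_finpartition, ← mul_assoc,
          inv_mul_eq_div, div_div_cancel_left' (cast_ne_zero.2 (factorial_ne_zero m))]
    _ = _ := by rw [← mul_sum, sum_fiberwise_of_maps_to fun P _ => hcard P]
end

section
/- For a partition λ = (λ_1 ≥ λ_2 ≥ ...) with finitely many nonzero parts and k a positive integer, the function p_k(λ) = Σ_{i≥1} [(λ_i − i + 1/2)^k − (−i + 1/2)^k] + (1 − 2^{−k})ζ(−k) satisfies p_k(λ') = (−1)^{k+1} p_k(λ), where λ' is the conjugate (transposed) partition. -/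
open Finset

/-- A downward-closed finset of naturals is an initial segment. -/
lemma mem_iff_lt_card_of_dc (s : Finset ℕ) (hdc : ∀ m ∈ s, ∀ m', m' ≤ m → m' ∈ s) (i : ℕ) :
    i ∈ s ↔ i < s.card := by
  constructor
  · intro hi
    have hsub : Finset.range (i + 1) ⊆ s := fun m hm =>
      hdc i hi m (Nat.lt_succ_iff.mp (Finset.mem_range.mp hm))
    have := Finset.card_le_card hsub
    simpa using this
  · intro hi
    by_contra hns
    have hsub : s ⊆ Finset.range i := by
      intro m hm
      rw [Finset.mem_range]
      by_contra hmi
      exact hns (hdc m hm i (by omega))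
    have := Finset.card_le_card hsub
    simp only [Finset.card_range] at this
    omega

/-- The regularized shifted power sum
`p_k(λ) = Σ_{i≥1} [(λ_i - i + 1/2)^k - (-i + 1/2)^k] + (1 - 2^{-k}) ζ(-k)`,
for a partition given as `λ_{i+1} = f i` (`i = 0, 1, 2, …`). -/
noncomputable def pShifted (k : ℕ) (f : ℕ → ℕ) : ℂ :=
  (∑' i : ℕ, (((f i : ℂ) - (i : ℂ) - 1 / 2) ^ k - (-(i : ℂ) - 1 / 2) ^ k)) +
    (1 - (2 : ℂ) ^ (-(k : ℤ))) * riemannZeta (-(k : ℂ))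

/-- The conjugate (transposed) partition: `λ'_{j+1} = #{i : λ_i ≥ j+1}`. -/
noncomputable def conjPartition (f : ℕ → ℕ) : ℕ → ℕ :=
  fun j => Set.ncard {i : ℕ | j + 1 ≤ f i}

lemma conj_eq_card (f : ℕ → ℕ) (N : ℕ) (hN : ∀ i ≥ N, f i = 0) (j : ℕ) :
    conjPartition f j = ((Finset.range N).filter (fun i => j + 1 ≤ f i)).card := by
  unfold conjPartition
  have hset : {i : ℕ | j + 1 ≤ f i} =
      ↑((Finset.range N).filter fun i => j + 1 ≤ f i) := by
    ext i
    simp only [Set.mem_setOf_eq, Finset.coe_filter, Finset.mem_range, Set.mem_setOf_eq]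
    constructor
    · intro h
      refine ⟨?_, h⟩
      by_contra hi
      have := hN i (by omega)
      omega
    · tauto
  rw [hset, Set.ncard_coe_finset]

lemma conj_duality (f : ℕ → ℕ) (hmono : Antitone f) (N : ℕ) (hN : ∀ i ≥ N, f i = 0)
    (i j : ℕ) : i + 1 ≤ conjPartition f j ↔ j + 1 ≤ f i := by
  rw [conj_eq_card f N hN j]
  have hdc : ∀ m ∈ (Finset.range N).filter (fun i => j + 1 ≤ f i), ∀ m', m' ≤ m →
      m' ∈ (Finset.range N).filter (fun i => j + 1 ≤ f i) := by
    intro m hm m' hm'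
    simp only [Finset.mem_filter, Finset.mem_range] at hm ⊢
    exact ⟨by omega, le_trans hm.2 (hmono hm')⟩
  have hmem := mem_iff_lt_card_of_dc _ hdc i
  simp only [Finset.mem_filter, Finset.mem_range] at hmem
  constructor
  · intro h
    exact (hmem.mpr (by omega)).2
  · intro h
    have hiN : i < N := by
      by_contra hi
      have := hN i (by omega)
      omega
    have := hmem.mp ⟨hiN, h⟩
    omega

lemma conj_le (f : ℕ → ℕ) (N : ℕ) (hN : ∀ i ≥ N, f i = 0) (j : ℕ) :
    conjPartition f j ≤ N := by
  rw [conj_eq_card f N hN j]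
  calc ((Finset.range N).filter fun i => j + 1 ≤ f i).card
      ≤ (Finset.range N).card := Finset.card_le_card (Finset.filter_subset _ _)
    _ = N := Finset.card_range N

lemma conj_zero (f : ℕ → ℕ) (hmono : Antitone f) (N : ℕ) (hN : ∀ i ≥ N, f i = 0)
    (j : ℕ) (hj : f 0 ≤ j) : conjPartition f j = 0 := by
  rw [conj_eq_card f N hN j]
  rw [Finset.card_eq_zero, Finset.filter_eq_empty_iff]
  intro i _
  have := hmono (Nat.zero_le i)
  omega

/-- **Parity of `p_k` under conjugation of partitions.**
For a partition `λ` (a weakly decreasing, eventually zero sequence) and `k ≥ 1`,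
`p_k(λ') = (-1)^{k+1} p_k(λ)`, where `λ'` is the conjugate partition. -/
theorem pShifted_conjugate (k : ℕ) (hk : 1 ≤ k) (f : ℕ → ℕ)
    (hmono : Antitone f) (hfin : ∃ N : ℕ, ∀ i ≥ N, f i = 0) :
    pShifted k (conjPartition f) = (-1 : ℂ) ^ (k + 1) * pShifted k f := by
  obtain ⟨N, hN⟩ := hfin
  set M := f 0 with hM
  set g := conjPartition f with hg
  have hgN : ∀ j, g j ≤ N := conj_le f N hN
  have hdual : ∀ i j, i + 1 ≤ g j ↔ j + 1 ≤ f i := conj_duality f hmono N hN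
  have hg0 : ∀ j, M ≤ j → g j = 0 := fun j hj => conj_zero f hmono N hN j hj
  have hganti : ∀ j j', j ≤ j' → g j' ≤ g j := by
    intro j j' hjj
    rw [hg, conj_eq_card f N hN, conj_eq_card f N hN]
    apply Finset.card_le_card
    intro x hx
    simp only [Finset.mem_filter, Finset.mem_range] at hx ⊢
    exact ⟨hx.1, by omega⟩
  have hfM : ∀ i, f i ≤ M := fun i => hmono (Nat.zero_le i)
  -- reduce tsums to finite sums
  have t1 : (∑' i : ℕ, (((f i : ℂ) - (i : ℂ) - 1 / 2) ^ k - (-(i : ℂ) - 1 / 2) ^ k))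
      = ∑ i ∈ Finset.range N, (((f i : ℂ) - (i : ℂ) - 1 / 2) ^ k - (-(i : ℂ) - 1 / 2) ^ k) := by
    apply tsum_eq_sum
    intro i hi
    rw [hN i (by simpa using hi)]
    push_cast
    ring
  have t2 : (∑' j : ℕ, (((g j : ℂ) - (j : ℂ) - 1 / 2) ^ k - (-(j : ℂ) - 1 / 2) ^ k))
      = ∑ j ∈ Finset.range M, (((g j : ℂ) - (j : ℂ) - 1 / 2) ^ k - (-(j : ℂ) - 1 / 2) ^ k) := by
    apply tsum_eq_sum
    intro j hj
    rw [hg0 j (by simpa using hj)]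
    push_cast
    ring
  -- the key bijection identity
  set a : ℕ → ℕ := fun i => f i + (N - (i + 1)) with ha
  set b : ℕ → ℕ := fun j => j + (N - g j) with hb
  have hinja : ∀ i ∈ Finset.range N, ∀ i' ∈ Finset.range N, a i = a i' → i = i' := by
    intro i hi i' hi' h
    simp only [Finset.mem_range] at hi hi'
    simp only [ha] at h
    rcases le_total i i' with h' | h'
    · have := hmono h'
      omega
    · have := hmono h'
      omega
  have hinjb : ∀ j ∈ Finset.range M, ∀ j' ∈ Finset.range M, b j = b j' → j = j' := by
    intro j hj j' hj' h
    simp only [Finset.mem_range] at hj hj'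
    simp only [hb] at h
    have h1 := hgN j
    have h2 := hgN j'
    rcases le_total j j' with h' | h'
    · have := hganti j j' h'
      omega
    · have := hganti j' j h'
      omega
  have hne : ∀ i < N, ∀ j < M, a i ≠ b j := by
    intro i hi j hj
    simp only [ha, hb]
    have h1 := hgN j
    have h2 := hdual i j
    rcases Nat.lt_or_ge j (f i) with h3 | h3
    · have h4 : i + 1 ≤ g j := h2.mpr (by omega)
      omega
    · have h4 : ¬ (i + 1 ≤ g j) := fun h => by have := h2.mp h; omega
      omega
  have hdisj : Disjoint ((Finset.range N).image a) ((Finset.range M).image b) := by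
    rw [Finset.disjoint_left]
    intro x hx hx'
    simp only [Finset.mem_image, Finset.mem_range] at hx hx'
    obtain ⟨i, hi, hxi⟩ := hx
    obtain ⟨j, hj, hxj⟩ := hx'
    exact hne i hi j hj (hxi.trans hxj.symm)
  have hunion : (Finset.range N).image a ∪ (Finset.range M).image b = Finset.range (N + M) := by
    apply Finset.eq_of_subset_of_card_le
    · intro x hx
      simp only [Finset.mem_union, Finset.mem_image, Finset.mem_range] at hx ⊢
      rcases hx with ⟨i, hi, hxi⟩ | ⟨j, hj, hxj⟩
      · simp only [ha] at hxi
        have := hfM i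
        omega
      · simp only [hb] at hxj
        have := hgN j
        omega
    · rw [Finset.card_range, Finset.card_union_of_disjoint hdisj,
        Finset.card_image_of_injOn (by intro x hx y hy; exact hinja x hx y hy),
        Finset.card_image_of_injOn (by intro x hx y hy; exact hinjb x hx y hy),
        Finset.card_range, Finset.card_range]
  have key : (∑ i ∈ Finset.range N, ((f i : ℂ) - (i : ℂ) - 1 / 2) ^ k)
      + (∑ j ∈ Finset.range M, ((j : ℂ) - (g j : ℂ) + 1 / 2) ^ k)
      = ∑ m ∈ Finset.range (N + M), ((m : ℂ) - (N : ℂ) + 1 / 2) ^ k := by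
    rw [← hunion, Finset.sum_union hdisj, Finset.sum_image hinja, Finset.sum_image hinjb]
    congr 1
    · apply Finset.sum_congr rfl
      intro i hi
      simp only [Finset.mem_range] at hi
      have h1 : i + 1 ≤ N := hi
      have : ((a i : ℕ) : ℂ) - (N : ℂ) + 1 / 2 = (f i : ℂ) - (i : ℂ) - 1 / 2 := by
        simp only [ha]
        push_cast [Nat.cast_sub h1]
        ring
      rw [this]
    · apply Finset.sum_congr rfl
      intro j hj
      have h1 : g j ≤ N := hgN j
      have : ((b j : ℕ) : ℂ) - (N : ℂ) + 1 / 2 = (j : ℂ) - (g j : ℂ) + 1 / 2 := by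
        simp only [hb]
        push_cast [Nat.cast_sub h1]
        ring
      rw [this]
  -- split the right-hand side of key
  have hsplit : (∑ m ∈ Finset.range (N + M), ((m : ℂ) - (N : ℂ) + 1 / 2) ^ k)
      = (∑ i ∈ Finset.range N, (-(i : ℂ) - 1 / 2) ^ k)
        + (∑ j ∈ Finset.range M, ((j : ℂ) + 1 / 2) ^ k) := by
    rw [Finset.sum_range_add]
    congr 1
    · rw [← Finset.sum_range_reflect]
      apply Finset.sum_congr rfl
      intro i hi
      simp only [Finset.mem_range] at hi
      have h1 : i + 1 ≤ N := hi
      have h2 : N - 1 - i = N - (i + 1) := by omega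
      rw [h2]
      have : ((N - (i + 1) : ℕ) : ℂ) - (N : ℂ) + 1 / 2 = -(i : ℂ) - 1 / 2 := by
        push_cast [Nat.cast_sub h1]
        ring
      rw [this]
    · apply Finset.sum_congr rfl
      intro j hj
      have : ((N + j : ℕ) : ℂ) - (N : ℂ) + 1 / 2 = (j : ℂ) + 1 / 2 := by
        push_cast
        ring
      rw [this]
  -- termwise sign flips
  have hR : (∑ j ∈ Finset.range M, ((g j : ℂ) - (j : ℂ) - 1 / 2) ^ k)
      = (-1 : ℂ) ^ k * ∑ j ∈ Finset.range M, ((j : ℂ) - (g j : ℂ) + 1 / 2) ^ k := by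
    rw [Finset.mul_sum]
    apply Finset.sum_congr rfl
    intro j _
    rw [← neg_pow]
    ring_nf
  have hS : (∑ j ∈ Finset.range M, (-(j : ℂ) - 1 / 2) ^ k)
      = (-1 : ℂ) ^ k * ∑ j ∈ Finset.range M, ((j : ℂ) + 1 / 2) ^ k := by
    rw [Finset.mul_sum]
    apply Finset.sum_congr rfl
    intro j _
    rw [← neg_pow]
    ring_nf
  -- the zeta constant is invariant (it vanishes for even k)
  have hc : ((-1 : ℂ)) ^ (k + 1) * ((1 - (2 : ℂ) ^ (-(k : ℤ))) * riemannZeta (-(k : ℂ)))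
      = (1 - (2 : ℂ) ^ (-(k : ℤ))) * riemannZeta (-(k : ℂ)) := by
    rcases Nat.even_or_odd k with he | ho
    · obtain ⟨n, hn⟩ := he
      have hn1 : 1 ≤ n := by omega
      have hz : riemannZeta (-(k : ℂ)) = 0 := by
        have h0 := riemannZeta_neg_two_mul_nat_add_one (n - 1)
        have h2 : (-2 * (((n - 1 : ℕ) : ℂ) + 1)) = -(k : ℂ) := by
          have hkc : (k : ℂ) = (n : ℂ) + (n : ℂ) := by exact_mod_cast congrArg Nat.cast hn
          push_cast [Nat.cast_sub hn1]
          rw [hkc]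
          ring
        rwa [h2] at h0
      rw [hz]
      ring
    · have : (-1 : ℂ) ^ (k + 1) = 1 := Even.neg_one_pow (by
        obtain ⟨m, hm⟩ := ho
        exact ⟨m + 1, by omega⟩)
      rw [this, one_mul]
  -- put everything together
  unfold pShifted
  rw [t1, t2]
  rw [Finset.sum_sub_distrib, Finset.sum_sub_distrib]
  rw [hsplit] at key
  linear_combination hR - hS + (-1 : ℂ) ^ k * key - hc
end
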